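/- Let Q be a ∂_F-delta operator with ∂_F-basic polynomial sequence (q_n)_{n≥0}. A polynomial sequence (s_n)_{n≥0} with deg s_n = n is a sequence of Sheffer F-polynomials of Q if and only if there exists an invertible S ∈ Σ_F (inverse lying in Σ_F) such that s_n = S^{−1} q_n for all n ≥ 0. -/

import Mathlib

open Polynomial Finset

/-- F-factorial: `Ffact n = F_n · F_{n-1} ··· F_1`, with `Ffact 0 = 1`. -/
def Ffact (n : ℕ) : ℕ := ∏ i ∈ Finset.range n, Nat.fib (i + 1)

/-- Fibonomial coefficient `C_F(n,k) = F_n!/(F_k!·F_{n−k}!)`, taken in a field `K`. -/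
noncomputable def fibnom (K : Type*) [Field K] (n k : ℕ) : K :=
  (Ffact n : K) / ((Ffact k : K) * (Ffact (n - k) : K))

variable (K : Type*) [Field K] [CharZero K]

/-- The F-derivative `∂_F`, the linear operator with `∂_F x^n = F_n x^{n-1}`. -/
noncomputable def fderivF : Module.End K (Polynomial K) :=
  Polynomial.lsum fun n => (Nat.fib n : K) • (Polynomial.monomial (n - 1) : K →ₗ[K] Polynomial K)

/-- The F-translation operator `E^y(∂_F) = Σ_{k≥0} (y^k/F_k!) ∂_F^k`; since `∂_F`
strictly decreases degree, the sum truncated at `natDegree p + 1` is the full sum. -/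
noncomputable def Etrans (y : K) (p : Polynomial K) : Polynomial K :=
  ∑ k ∈ Finset.range (p.natDegree + 1), (y ^ k / (Ffact k : K)) • ((fderivF K ^ k) p)

/-- A linear operator on `K[x]` is `∂_F`-shift invariant iff it commutes with every
F-translation operator `E^y(∂_F)`. -/
def ShiftInv (T : Module.End K (Polynomial K)) : Prop :=
  ∀ (y : K) (p : Polynomial K), T (Etrans K y p) = Etrans K y (T p)

/-- A `∂_F`-delta operator: a `∂_F`-shift invariant operator `Q` with `Q x` a nonzero
constant. -/
def DeltaOp (Q : Module.End K (Polynomial K)) : Prop :=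
  ShiftInv K Q ∧ ∃ c : K, c ≠ 0 ∧ Q Polynomial.X = Polynomial.C c

/-- `(q_n)` is the `∂_F`-basic polynomial sequence of `Q`. -/
def BasicSeq (Q : Module.End K (Polynomial K)) (q : ℕ → Polynomial K) : Prop :=
  (∀ n : ℕ, (q n).degree = n) ∧ q 0 = 1 ∧ (∀ n : ℕ, 1 ≤ n → (q n).eval 0 = 0) ∧
    ∀ n : ℕ, 1 ≤ n → Q (q n) = (Nat.fib n : K) • q (n - 1)

/-- The operator `x̂_F`, with `x̂_F x^n = ((n+1)/F_{n+1}) x^{n+1}`. -/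
noncomputable def xF : Module.End K (Polynomial K) :=
  Polynomial.lsum fun n =>
    (((n : K) + 1) / (Nat.fib (n + 1) : K)) • (Polynomial.monomial (n + 1) : K →ₗ[K] Polynomial K)

/-- The Graves–Pincherle F-derivative `T' = T∘x̂_F − x̂_F∘T`. -/
noncomputable def GPderiv (T : Module.End K (Polynomial K)) : Module.End K (Polynomial K) :=
  T * xF K - xF K * T

/-- `T = Σ_{k≥0} (a_k/F_k!) Q^k`, expressed via truncations: since a delta operator `Q`
strictly decreases degree, `Q^k p = 0` for `k > natDegree p`, so the truncated sums agree. -/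
def OpSumRep (Q : Module.End K (Polynomial K)) (a : ℕ → K) (T : Module.End K (Polynomial K)) : Prop :=
  ∀ (p : Polynomial K) (N : ℕ), p.natDegree < N →
    T p = ∑ k ∈ Finset.range N, (a k / (Ffact k : K)) • ((Q ^ k) p)

/-- `(s_n)` is a sequence of Sheffer F-polynomials of `Q`. -/
def ShefferSeq (Q : Module.End K (Polynomial K)) (s : ℕ → Polynomial K) : Prop :=
  (∀ n : ℕ, (s n).degree = n) ∧ (∃ c : K, c ≠ 0 ∧ s 0 = Polynomial.C c) ∧
    ∀ n : ℕ, 1 ≤ n → Q (s n) = (Nat.fib n : K) • s (n - 1)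

set_option linter.unusedSectionVars false

-- ===================== auxiliary lemmas =====================

lemma Ffact_cast_ne_zero (n : ℕ) : (Ffact n : K) ≠ 0 := by
  have : 0 < Ffact n := Finset.prod_pos fun i _ => Nat.fib_pos.mpr (Nat.succ_pos i)
  exact_mod_cast this.ne'

lemma Ffact_zero : Ffact 0 = 1 := by simp [Ffact]

lemma Ffact_succ (n : ℕ) : Ffact (n + 1) = Ffact n * Nat.fib (n + 1) := by
  simp [Ffact, Finset.prod_range_succ]

lemma fib_cast_ne_zero {n : ℕ} (h : 1 ≤ n) : (Nat.fib n : K) ≠ 0 := by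
  have : 0 < Nat.fib n := Nat.fib_pos.mpr h
  exact_mod_cast this.ne'

lemma fderivF_monomial (n : ℕ) (a : K) :
    fderivF K (monomial n a) = (Nat.fib n : K) • monomial (n - 1) a := by
  simp [fderivF, Polynomial.lsum_apply, Polynomial.sum_monomial_index]

lemma fderivF_natDegree0 (p : Polynomial K) (h : p.natDegree = 0) : fderivF K p = 0 := by
  rw [Polynomial.eq_C_of_natDegree_eq_zero h, ← Polynomial.monomial_zero_left,
    fderivF_monomial]
  simp

lemma fderivF_natDegree_le (p : Polynomial K) :
    (fderivF K p).natDegree ≤ p.natDegree - 1 := by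
  have : fderivF K p = p.sum fun n a => (Nat.fib n : K) • monomial (n - 1) a := by
    simp [fderivF, Polynomial.lsum_apply]
  rw [this, Polynomial.sum]
  refine Polynomial.natDegree_sum_le_of_forall_le _ _ fun i hi => ?_
  refine le_trans (Polynomial.natDegree_smul_le _ _) ?_
  refine le_trans (Polynomial.natDegree_monomial_le _) ?_
  exact Nat.sub_le_sub_right (Polynomial.le_natDegree_of_mem_supp i hi) 1

/-- generic: an operator killing constants and decreasing degree is locally nilpotent -/
lemma pow_apply_eq_zero_of (T : Module.End K (Polynomial K))
    (h0 : ∀ p : Polynomial K, p.natDegree = 0 → T p = 0)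
    (hlt : ∀ p : Polynomial K, (T p).natDegree ≤ p.natDegree - 1) :
    ∀ (k : ℕ) (p : Polynomial K), p.natDegree < k → (T ^ k) p = 0 := by
  intro k
  induction k with
  | zero => intro p hp; omega
  | succ k IH =>
    intro p hp
    rw [pow_succ, Module.End.mul_apply]
    rcases Nat.eq_zero_or_pos p.natDegree with h | h
    · rw [h0 p h, map_zero]
    · exact IH _ (by have := hlt p; omega)

lemma fderivF_pow_eq_zero {k : ℕ} {p : Polynomial K} (h : p.natDegree < k) :
    (fderivF K ^ k) p = 0 :=
  pow_apply_eq_zero_of K _ (fderivF_natDegree0 K) (fderivF_natDegree_le K) k p h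

lemma etrans_eq {N : ℕ} (y : K) (p : Polynomial K) (hN : p.natDegree < N) :
    Etrans K y p = ∑ k ∈ Finset.range N, (y ^ k / (Ffact k : K)) • ((fderivF K ^ k) p) := by
  rw [Etrans]
  refine Finset.sum_subset (by intro x hx; simp_all; omega) ?_
  intro k hk hk'
  simp only [Finset.mem_range, not_lt] at hk'
  rw [fderivF_pow_eq_zero K (by omega), smul_zero]

lemma etrans_smul (y c : K) (p : Polynomial K) :
    Etrans K y (c • p) = c • Etrans K y p := by
  rw [etrans_eq K y (c • p) (Nat.lt_succ_of_le (Polynomial.natDegree_smul_le c p)),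
    etrans_eq K y p (Nat.lt_succ_self _), Finset.smul_sum]
  refine Finset.sum_congr rfl fun k _ => ?_
  rw [map_smul, smul_comm]

lemma fderivF_pow_monomial (k n : ℕ) (a : K) :
    (fderivF K ^ k) (monomial n a)
      = (∏ i ∈ Finset.range k, (Nat.fib (n - i) : K)) • monomial (n - k) a := by
  induction k with
  | zero => simp
  | succ k IH =>
    rw [pow_succ', Module.End.mul_apply, IH, map_smul, fderivF_monomial,
      Finset.prod_range_succ]
    rw [smul_smul, mul_comm]
    congr 1

lemma prod_fib_eq_Ffact (n : ℕ) :
    (∏ i ∈ Finset.range n, (Nat.fib (n - i) : K)) = (Ffact n : K) := by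
  rw [Ffact]
  push_cast
  rw [← Finset.prod_range_reflect (fun i => (Nat.fib (i + 1) : K)) n]
  refine Finset.prod_congr rfl fun i hi => ?_
  simp only [Finset.mem_range] at hi
  have : n - 1 - i + 1 = n - i := by omega
  rw [this]

lemma eval_fderivF_pow_zero (k : ℕ) (p : Polynomial K) :
    ((fderivF K ^ k) p).eval 0 = (Ffact k : K) * p.coeff k := by
  induction p using Polynomial.induction_on' with
  | add p q hp hq => rw [map_add, Polynomial.eval_add, hp, hq, Polynomial.coeff_add]; ring
  | monomial n a =>
    rw [fderivF_pow_monomial, Polynomial.eval_smul, Polynomial.eval_monomial,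
      Polynomial.coeff_monomial, smul_eq_mul]
    rcases lt_trichotomy n k with h | h | h
    · rw [if_neg (by omega), Finset.prod_eq_zero (Finset.mem_range.mpr h) (by simp), mul_comm]
      simp
    · subst h
      rw [if_pos rfl, prod_fib_eq_Ffact, Nat.sub_self, pow_zero, mul_one]
    · rw [if_neg (by omega), zero_pow (by omega), mul_zero]
      simp

lemma eval_etrans_zero (y : K) (p : Polynomial K) :
    (Etrans K y p).eval 0 = p.eval y := by
  rw [Etrans, Polynomial.eval_finset_sum]
  rw [Polynomial.eval_eq_sum_range (p := p) y]
  refine Finset.sum_congr rfl fun k _ => ?_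
  rw [Polynomial.eval_smul, eval_fderivF_pow_zero, smul_eq_mul]
  have := Ffact_cast_ne_zero K k
  field_simp

lemma etrans_C (y c : K) : Etrans K y (C c) = C c := by
  rw [etrans_eq K y (C c) (N := 1) (by simp)]
  simp [Ffact_zero]

lemma etrans_X (y : K) : Etrans K y X = X + C y := by
  rw [etrans_eq K y X (N := 2) (by simp)]
  rw [Finset.sum_range_succ, Finset.sum_range_succ, Finset.sum_range_zero]
  have h1 : fderivF K X = 1 := by
    rw [← Polynomial.monomial_one_one_eq_X, fderivF_monomial]; simp
  simp [h1, Ffact_zero, Ffact_succ, Polynomial.smul_eq_C_mul]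

/-- Vandermonde-type: polynomial-coefficient identity valid for all scalars. -/
lemma coeffs_eq_zero_of_forall {N : ℕ} (w : ℕ → Polynomial K)
    (h : ∀ y : K, ∑ k ∈ Finset.range N, y ^ k • w k = 0) :
    ∀ k < N, w k = 0 := by
  intro k hk
  ext m
  have hr : (∑ j ∈ Finset.range N, C ((w j).coeff m) * X ^ j : Polynomial K) = 0 := by
    apply Polynomial.funext
    intro y
    have := congrArg (fun p => Polynomial.coeff p m) (h y)
    simp only [Polynomial.finset_sum_coeff, Polynomial.coeff_smul, smul_eq_mul,
      Polynomial.coeff_zero] at this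
    simp only [Polynomial.eval_finset_sum, Polynomial.eval_mul, Polynomial.eval_C,
      Polynomial.eval_pow, Polynomial.eval_X, Polynomial.eval_zero]
    rw [show (∑ j ∈ Finset.range N, (w j).coeff m * y ^ j)
        = ∑ j ∈ Finset.range N, y ^ j * (w j).coeff m from
      Finset.sum_congr rfl fun j _ => mul_comm _ _]
    exact this
  have := congrArg (fun p => Polynomial.coeff p k) hr
  simp only [Polynomial.finset_sum_coeff, Polynomial.coeff_C_mul, Polynomial.coeff_X_pow,
    Polynomial.coeff_zero] at this
  rw [Finset.sum_eq_single k (fun j _ hj => by rw [if_neg (fun hh => hj hh.symm), mul_zero])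
    (fun hnk => absurd (Finset.mem_range.mpr hk) hnk)] at this
  simpa using this

lemma shiftInv_of_comm (T : Module.End K (Polynomial K))
    (h : ∀ p, T (fderivF K p) = fderivF K (T p)) : ShiftInv K T := by
  have hpow : ∀ (k : ℕ) (p : Polynomial K), T ((fderivF K ^ k) p) = (fderivF K ^ k) (T p) := by
    intro k
    induction k with
    | zero => simp
    | succ k IH =>
      intro p
      rw [pow_succ, Module.End.mul_apply, Module.End.mul_apply, IH (fderivF K p), h]
  intro y p
  set N := max p.natDegree (T p).natDegree + 1 with hNdef
  rw [etrans_eq K y p (N := N) (by omega), etrans_eq K y (T p) (N := N) (by omega), map_sum]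
  refine Finset.sum_congr rfl fun k _ => ?_
  rw [map_smul, hpow]

lemma comm_fderivF_of_shiftInv (T : Module.End K (Polynomial K)) (h : ShiftInv K T)
    (p : Polynomial K) : T (fderivF K p) = fderivF K (T p) := by
  set N := max p.natDegree (T p).natDegree + 2 with hNdef
  set w : ℕ → Polynomial K :=
    fun k => (Ffact k : K)⁻¹ • (T ((fderivF K ^ k) p) - (fderivF K ^ k) (T p)) with hw
  have key : ∀ y : K, ∑ k ∈ Finset.range N, y ^ k • w k = 0 := by
    intro y
    have h1 := h y p
    rw [etrans_eq K y p (N := N) (by omega), etrans_eq K y (T p) (N := N) (by omega), map_sum] at h1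
    have h2 : ∀ k ∈ Finset.range N, y ^ k • w k
        = (y ^ k / (Ffact k : K)) • (T ((fderivF K ^ k) p))
          - (y ^ k / (Ffact k : K)) • ((fderivF K ^ k) (T p)) := by
      intro k _
      rw [hw, smul_smul, ← smul_sub, div_eq_mul_inv]
    simp only [map_smul] at h1
    rw [Finset.sum_congr rfl h2, Finset.sum_sub_distrib]
    exact sub_eq_zero.mpr h1
  have h1 := coeffs_eq_zero_of_forall K w key 1 (by omega)
  rw [hw] at h1
  have hne := Ffact_cast_ne_zero K 1
  rcases smul_eq_zero.mp h1 with h' | h'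
  · exact absurd h' (inv_ne_zero hne)
  · have := sub_eq_zero.mp h'
    simpa using this

variable {K}

lemma delta_one {Q : Module.End K (Polynomial K)} (hQ : DeltaOp K Q) : Q 1 = 0 := by
  obtain ⟨hsi, c, hc, hX⟩ := hQ
  have h1 := hsi 1 X
  rw [etrans_X, hX, etrans_C, map_add, Polynomial.C_1] at h1
  have := h1
  rw [hX] at this
  exact (add_eq_left).mp this

lemma delta_C {Q : Module.End K (Polynomial K)} (hQ1 : Q 1 = 0) (c : K) : Q (C c) = 0 := by
  rw [← mul_one (C c), ← Polynomial.smul_eq_C_mul, map_smul, hQ1, smul_zero]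

lemma deg_ne_zero {f : Polynomial K} {n : ℕ} (h : f.degree = n) : f ≠ 0 := by
  intro h0; rw [h0, Polynomial.degree_zero] at h; exact (by simp at h)

lemma deg_natDegree {f : Polynomial K} {n : ℕ} (h : f.degree = n) : f.natDegree = n :=
  Polynomial.natDegree_eq_of_degree_eq_some h

lemma smul_deg {a : K} (ha : a ≠ 0) (f : Polynomial K) : (a • f).degree = f.degree := by
  rw [Polynomial.smul_eq_C_mul, Polynomial.degree_mul, Polynomial.degree_C ha, zero_add]

lemma Q_degree {Q : Module.End K (Polynomial K)} (hQ1 : Q 1 = 0)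
    {q : ℕ → Polynomial K} (hq : BasicSeq K Q q) :
    ∀ (m : ℕ) (p : Polynomial K), p.natDegree = m → 1 ≤ m →
      (Q p).degree = ((m - 1 : ℕ) : WithBot ℕ) := by
  intro m
  induction m using Nat.strong_induction_on with
  | _ m IH =>
    intro p hpm hm
    obtain ⟨hdeg, hq0, heval, hQq⟩ := hq
    have hp0 : p ≠ 0 := fun h => by rw [h, Polynomial.natDegree_zero] at hpm; omega
    have hqm := hdeg m
    have hqne : q m ≠ 0 := deg_ne_zero hqm
    have hlcq : (q m).leadingCoeff ≠ 0 := Polynomial.leadingCoeff_ne_zero.mpr hqne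
    set a := p.leadingCoeff / (q m).leadingCoeff with ha_def
    have ha : a ≠ 0 := div_ne_zero (Polynomial.leadingCoeff_ne_zero.mpr hp0) hlcq
    have hdeg_smul : (a • q m).degree = (m : WithBot ℕ) := by rw [smul_deg ha, hqm]
    have hlc : (a • q m).leadingCoeff = p.leadingCoeff := by
      rw [Polynomial.smul_eq_C_mul, Polynomial.leadingCoeff_mul, Polynomial.leadingCoeff_C,
        ha_def, div_mul_cancel₀ _ hlcq]
    set r := p - a • q m with hr_def
    have hrdeg : r.degree < p.degree := by
      refine Polynomial.degree_sub_lt ?_ hp0 hlc.symm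
      rw [hdeg_smul, Polynomial.degree_eq_natDegree hp0, hpm]
    have hpdecomp : p = a • q m + r := by rw [hr_def]; ring
    have hQp : Q p = a • ((Nat.fib m : K) • q (m - 1)) + Q r := by
      conv_lhs => rw [hpdecomp]
      rw [map_add, map_smul, hQq m hm]
    have hmain : (a • ((Nat.fib m : K) • q (m - 1))).degree = ((m - 1 : ℕ) : WithBot ℕ) := by
      rw [smul_deg ha, smul_deg (fib_cast_ne_zero (K := K) hm), hdeg (m - 1)]
    have hQr : (Q r).degree < ((m - 1 : ℕ) : WithBot ℕ) := by
      rcases eq_or_ne r 0 with h0 | h0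
      · rw [h0, map_zero, Polynomial.degree_zero]; exact WithBot.bot_lt_coe _
      rcases Nat.eq_zero_or_pos r.natDegree with hr0 | hr1
      · rw [Polynomial.eq_C_of_natDegree_eq_zero hr0, delta_C hQ1, Polynomial.degree_zero]
        exact WithBot.bot_lt_coe _
      · have hrm : r.natDegree < m := by
          have := hrdeg
          rw [Polynomial.degree_eq_natDegree h0, Polynomial.degree_eq_natDegree hp0, hpm] at this
          exact_mod_cast this
        rw [IH r.natDegree hrm r rfl hr1]
        exact_mod_cast (by omega : r.natDegree - 1 < m - 1)
    rw [hQp, Polynomial.degree_add_eq_left_of_degree_lt (by rw [hmain]; exact hQr), hmain]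

lemma Q_natDegree_le {Q : Module.End K (Polynomial K)} (hQ1 : Q 1 = 0)
    {q : ℕ → Polynomial K} (hq : BasicSeq K Q q) (p : Polynomial K) :
    (Q p).natDegree ≤ p.natDegree - 1 := by
  rcases Nat.eq_zero_or_pos p.natDegree with h0 | h1
  · rw [Polynomial.eq_C_of_natDegree_eq_zero h0, delta_C hQ1, Polynomial.natDegree_zero]
    omega
  · have := Q_degree hQ1 hq p.natDegree p rfl h1
    rw [deg_natDegree this]

lemma Q_zero_of_natDegree0 {Q : Module.End K (Polynomial K)} (hQ1 : Q 1 = 0)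
    (p : Polynomial K) (h : p.natDegree = 0) : Q p = 0 := by
  rw [Polynomial.eq_C_of_natDegree_eq_zero h, delta_C hQ1]

lemma Q_pow_zero {Q : Module.End K (Polynomial K)} (hQ1 : Q 1 = 0)
    {q : ℕ → Polynomial K} (hq : BasicSeq K Q q) {k : ℕ} {p : Polynomial K}
    (h : p.natDegree < k) : (Q ^ k) p = 0 :=
  pow_apply_eq_zero_of K Q (Q_zero_of_natDegree0 hQ1) (Q_natDegree_le hQ1 hq) k p h

lemma Q_ker {Q : Module.End K (Polynomial K)} (hQ1 : Q 1 = 0)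
    {q : ℕ → Polynomial K} (hq : BasicSeq K Q q) {p : Polynomial K}
    (h : Q p = 0) : ∃ c : K, p = C c := by
  rcases Nat.eq_zero_or_pos p.natDegree with h0 | h1
  · exact ⟨p.coeff 0, Polynomial.eq_C_of_natDegree_eq_zero h0⟩
  · have := Q_degree hQ1 hq p.natDegree p rfl h1
    rw [h, Polynomial.degree_zero] at this
    simp at this

lemma Q_pow_basic {Q : Module.End K (Polynomial K)} (hQ1 : Q 1 = 0)
    {q : ℕ → Polynomial K} (hq : BasicSeq K Q q) (k n : ℕ) :
    (Q ^ k) (q n) = (∏ i ∈ Finset.range k, (Nat.fib (n - i) : K)) • q (n - k) := by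
  obtain ⟨hdeg, hq0, heval, hQq⟩ := hq
  induction k with
  | zero => simp
  | succ k IH =>
    rw [pow_succ', Module.End.mul_apply, IH, map_smul]
    rcases Nat.lt_or_ge k n with h | h
    · rw [hQq (n - k) (by omega), Finset.prod_range_succ, smul_smul]
      have hnk : n - (k + 1) = n - k - 1 := by omega
      rw [hnk]
    · have : n - k = 0 := by omega
      rw [this, hq0, hQ1, smul_zero, Finset.prod_eq_zero (Finset.mem_range.mpr (by omega : n < k + 1))
        (by rw [(by omega : n - n = 0)]; simp), zero_smul]

lemma prod_fib_div {k n : ℕ} (h : k ≤ n) :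
    (∏ i ∈ Finset.range k, (Nat.fib (n - i) : K)) = (Ffact n : K) / (Ffact (n - k) : K) := by
  induction k with
  | zero => simp [div_self (Ffact_cast_ne_zero K n)]
  | succ k IH =>
    rw [Finset.prod_range_succ, IH (by omega)]
    have h1 : n - k = (n - (k + 1)) + 1 := by omega
    rw [h1, Ffact_succ]
    have h2 := Ffact_cast_ne_zero K (n - (k + 1))
    have h3 := fib_cast_ne_zero (K := K) (n := n - (k + 1) + 1) (by omega)
    push_cast
    field_simp

lemma Q_pow_basic_eval0 {Q : Module.End K (Polynomial K)} (hQ1 : Q 1 = 0)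
    {q : ℕ → Polynomial K} (hq : BasicSeq K Q q) (k n : ℕ) :
    ((Q ^ k) (q n)).eval 0 = if k = n then (Ffact n : K) else 0 := by
  rw [Q_pow_basic hQ1 hq, Polynomial.eval_smul, smul_eq_mul]
  rcases lt_trichotomy k n with h | h | h
  · rw [if_neg (by omega), hq.2.2.1 (n - k) (by omega), mul_zero]
  · subst h
    rw [if_pos rfl, prod_fib_eq_Ffact, Nat.sub_self, hq.2.1]
    simp
  · rw [if_neg (by omega), Finset.prod_eq_zero (Finset.mem_range.mpr h)
      (by rw [Nat.sub_self]; simp), zero_mul]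

lemma fderivF_shiftInv : ShiftInv K (fderivF K) :=
  shiftInv_of_comm K _ (fun _ => rfl)

lemma Qpow_swap {Q : Module.End K (Polynomial K)} (k : ℕ) (x : Polynomial K) :
    Q ((Q ^ k) x) = (Q ^ k) (Q x) := by
  rw [← Module.End.mul_apply, ← pow_succ', pow_succ, Module.End.mul_apply]

lemma taylor_basic {Q : Module.End K (Polynomial K)} (hQ : DeltaOp K Q)
    {q : ℕ → Polynomial K} (hq : BasicSeq K Q q) (y : K) :
    ∀ n, Etrans K y (q n) = ∑ k ∈ Finset.range (n + 1),
      (((q k).eval y) / (Ffact k : K)) • ((Q ^ k) (q n)) := by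
  have hQ1 : Q 1 = 0 := delta_one hQ
  intro n
  induction n with
  | zero =>
    have h1 : Etrans K y (1 : Polynomial K) = 1 := by
      rw [show (1 : Polynomial K) = C 1 from (map_one C).symm, etrans_C]
    rw [Finset.sum_range_one, hq.2.1, h1, pow_zero, Module.End.one_apply, Polynomial.eval_one,
      Ffact_zero]
    norm_num
  | succ n IH =>
    have hA : Q (Etrans K y (q (n + 1)))
        = (Nat.fib (n + 1) : K) • ∑ k ∈ Finset.range (n + 1),
            (((q k).eval y) / (Ffact k : K)) • ((Q ^ k) (q n)) := by
      rw [hQ.1 y (q (n + 1)), hq.2.2.2 (n + 1) (by omega), Nat.add_sub_cancel,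
        etrans_smul, IH]
    have hB : Q (∑ k ∈ Finset.range (n + 2),
          (((q k).eval y) / (Ffact k : K)) • ((Q ^ k) (q (n + 1))))
        = (Nat.fib (n + 1) : K) • ∑ k ∈ Finset.range (n + 1),
            (((q k).eval y) / (Ffact k : K)) • ((Q ^ k) (q n)) := by
      rw [map_sum]
      have hterm : ∀ k ∈ Finset.range (n + 2),
          Q ((((q k).eval y) / (Ffact k : K)) • ((Q ^ k) (q (n + 1))))
          = (Nat.fib (n + 1) : K) • ((((q k).eval y) / (Ffact k : K)) • ((Q ^ k) (q n))) := by
        intro k _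
        rw [map_smul, Qpow_swap, hq.2.2.2 (n + 1) (by omega), Nat.add_sub_cancel,
          map_smul, smul_comm]
      rw [Finset.sum_congr rfl hterm, ← Finset.smul_sum, Finset.sum_range_succ,
        Q_pow_zero hQ1 hq (by rw [deg_natDegree (hq.1 n)]; omega), smul_zero, add_zero]
    obtain ⟨c, hc⟩ := Q_ker hQ1 hq (p := Etrans K y (q (n + 1)) - ∑ k ∈ Finset.range (n + 2),
      (((q k).eval y) / (Ffact k : K)) • ((Q ^ k) (q (n + 1))))
      (by rw [map_sub, hA, hB, sub_self])
    have heval : (Etrans K y (q (n + 1)) - ∑ k ∈ Finset.range (n + 2),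
        (((q k).eval y) / (Ffact k : K)) • ((Q ^ k) (q (n + 1)))).eval 0 = 0 := by
      rw [Polynomial.eval_sub, eval_etrans_zero, Polynomial.eval_finset_sum]
      have hterm : ∀ k ∈ Finset.range (n + 2),
          ((((q k).eval y) / (Ffact k : K)) • ((Q ^ k) (q (n + 1)))).eval 0
          = (((q k).eval y) / (Ffact k : K)) * (if k = n + 1 then (Ffact (n + 1) : K) else 0) := by
        intro k _
        rw [Polynomial.eval_smul, Q_pow_basic_eval0 hQ1 hq, smul_eq_mul]
      rw [Finset.sum_congr rfl hterm, Finset.sum_eq_single (n + 1)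
        (fun k _ hk => by rw [if_neg hk, mul_zero])
        (fun h => absurd (Finset.mem_range.mpr (by omega)) h)]
      rw [if_pos rfl, div_mul_cancel₀ _ (Ffact_cast_ne_zero K (n + 1)), sub_self]
    rw [hc, Polynomial.eval_C] at heval
    rw [heval, Polynomial.C_0] at hc
    exact sub_eq_zero.mp hc

lemma expand_basic {Q : Module.End K (Polynomial K)} (hQ : DeltaOp K Q)
    {q : ℕ → Polynomial K} (hq : BasicSeq K Q q)
    {T : Module.End K (Polynomial K)} (hT : ShiftInv K T) (n : ℕ) :
    T (q n) = ∑ k ∈ Finset.range (n + 1),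
      (((T (q k)).eval 0) / (Ffact k : K)) • ((Q ^ k) (q n)) := by
  have hQ1 := delta_one hQ
  apply Polynomial.funext
  intro y
  have hL : (T (q n)).eval y = ∑ k ∈ Finset.range (n + 1),
      ((q k).eval y / (Ffact k : K))
        * ((∏ i ∈ Finset.range k, (Nat.fib (n - i) : K)) * (T (q (n - k))).eval 0) := by
    rw [← eval_etrans_zero K y (T (q n)), ← hT y (q n), taylor_basic hQ hq y n, map_sum,
      Polynomial.eval_finset_sum]
    refine Finset.sum_congr rfl fun k _ => ?_
    rw [map_smul, Polynomial.eval_smul, Q_pow_basic hQ1 hq, map_smul, Polynomial.eval_smul,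
      smul_eq_mul, smul_eq_mul]
  have hR : (∑ k ∈ Finset.range (n + 1),
        (((T (q k)).eval 0) / (Ffact k : K)) • ((Q ^ k) (q n))).eval y
      = ∑ k ∈ Finset.range (n + 1), (((T (q k)).eval 0) / (Ffact k : K))
          * ((∏ i ∈ Finset.range k, (Nat.fib (n - i) : K)) * (q (n - k)).eval y) := by
    rw [Polynomial.eval_finset_sum]
    refine Finset.sum_congr rfl fun k _ => ?_
    rw [Q_pow_basic hQ1 hq, Polynomial.eval_smul, Polynomial.eval_smul, smul_eq_mul, smul_eq_mul]
  rw [hL, hR]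
  conv_lhs => rw [← Finset.sum_range_reflect]
  refine Finset.sum_congr rfl fun k hk => ?_
  simp only [Finset.mem_range] at hk
  have hk' : k ≤ n := by omega
  have h1 : n + 1 - 1 - k = n - k := by omega
  rw [h1]
  have h2 : n - (n - k) = k := by omega
  rw [prod_fib_div (by omega : n - k ≤ n), prod_fib_div hk', h2]
  have e1 := Ffact_cast_ne_zero K k
  have e2 := Ffact_cast_ne_zero K (n - k)
  have e3 := Ffact_cast_ne_zero K n
  field_simp

lemma expand_basic' {Q : Module.End K (Polynomial K)} (hQ : DeltaOp K Q)
    {q : ℕ → Polynomial K} (hq : BasicSeq K Q q)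
    {T : Module.End K (Polynomial K)} (hT : ShiftInv K T) {n N : ℕ} (hN : n < N) :
    T (q n) = ∑ k ∈ Finset.range N,
      (((T (q k)).eval 0) / (Ffact k : K)) • ((Q ^ k) (q n)) := by
  rw [expand_basic hQ hq hT n]
  refine Finset.sum_subset (fun x hx => Finset.mem_range.mpr (by
    simp only [Finset.mem_range] at hx; omega)) fun k _ hk' => ?_
  simp only [Finset.mem_range, not_lt] at hk'
  rw [Q_pow_zero (delta_one hQ) hq (by rw [deg_natDegree (hq.1 n)]; omega), smul_zero]

lemma expand_all {Q : Module.End K (Polynomial K)} (hQ : DeltaOp K Q)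
    {q : ℕ → Polynomial K} (hq : BasicSeq K Q q)
    {T : Module.End K (Polynomial K)} (hT : ShiftInv K T) :
    ∀ (p : Polynomial K) (N : ℕ), p.natDegree < N →
      T p = ∑ k ∈ Finset.range N, (((T (q k)).eval 0) / (Ffact k : K)) • ((Q ^ k) p) := by
  have hQ1 := delta_one hQ
  suffices h : ∀ (m : ℕ) (p : Polynomial K), p.natDegree ≤ m → ∀ N, p.natDegree < N →
      T p = ∑ k ∈ Finset.range N, (((T (q k)).eval 0) / (Ffact k : K)) • ((Q ^ k) p) by
    intro p N hN; exact h p.natDegree p le_rfl N hN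
  intro m
  induction m using Nat.strong_induction_on with
  | _ m IH =>
    intro p hpm N hN
    rcases eq_or_ne p 0 with h0 | h0
    · simp [h0]
    set d := p.natDegree with hd_def
    have hqd := hq.1 d
    have hqne : q d ≠ 0 := deg_ne_zero hqd
    have hlcq : (q d).leadingCoeff ≠ 0 := Polynomial.leadingCoeff_ne_zero.mpr hqne
    set a := p.leadingCoeff / (q d).leadingCoeff with ha_def
    have ha : a ≠ 0 := div_ne_zero (Polynomial.leadingCoeff_ne_zero.mpr h0) hlcq
    set r := p - a • q d with hr_def
    have hpdecomp : p = a • q d + r := by rw [hr_def]; ring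
    have hr : r = 0 ∨ r.natDegree < d := by
      rcases eq_or_ne r 0 with h | h
      · exact Or.inl h
      refine Or.inr ?_
      have hrdeg : r.degree < p.degree := by
        refine Polynomial.degree_sub_lt ?_ h0 ?_
        · rw [smul_deg ha, hqd, Polynomial.degree_eq_natDegree h0]
        · rw [Polynomial.smul_eq_C_mul, Polynomial.leadingCoeff_mul, Polynomial.leadingCoeff_C,
            ha_def, div_mul_cancel₀ _ hlcq]
      have := hrdeg
      rw [Polynomial.degree_eq_natDegree h, Polynomial.degree_eq_natDegree h0] at this
      exact_mod_cast this
    have hTr : T r = ∑ k ∈ Finset.range N,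
        (((T (q k)).eval 0) / (Ffact k : K)) • ((Q ^ k) r) := by
      rcases hr with h | h
      · simp [h]
      · exact IH r.natDegree (by omega) r le_rfl N (by omega)
    have hTp : T p = a • T (q d) + T r := by
      conv_lhs => rw [hpdecomp]
      rw [map_add, map_smul]
    rw [hTp, expand_basic' hQ hq hT (by omega : d < N), hTr, Finset.smul_sum,
      ← Finset.sum_add_distrib]
    refine Finset.sum_congr rfl fun k _ => ?_
    rw [smul_comm a, ← smul_add, ← map_smul (Q ^ k), ← map_add, ← hpdecomp]

lemma shiftInv_comm_Q {Q : Module.End K (Polynomial K)} (hQ : DeltaOp K Q)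
    {q : ℕ → Polynomial K} (hq : BasicSeq K Q q)
    {T : Module.End K (Polynomial K)} (hT : ShiftInv K T) (p : Polynomial K) :
    T (Q p) = Q (T p) := by
  have hQ1 := delta_one hQ
  have hQp : (Q p).natDegree < p.natDegree + 1 := by
    have := Q_natDegree_le hQ1 hq p; omega
  rw [expand_all hQ hq hT (Q p) (p.natDegree + 1) hQp,
    expand_all hQ hq hT p (p.natDegree + 1) (by omega), map_sum]
  refine Finset.sum_congr rfl fun k _ => ?_
  rw [map_smul, Qpow_swap]

lemma seq_linearIndependent (f : ℕ → Polynomial K) (hdeg : ∀ n, (f n).degree = n) :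
    LinearIndependent K f := by
  rw [linearIndependent_iff']
  suffices h : ∀ (t : Finset ℕ) (g : ℕ → K), ∑ i ∈ t, g i • f i = 0 → ∀ i ∈ t, g i = 0 by
    intro t g hsum i hi; exact h t g hsum i hi
  intro t
  induction t using Finset.induction_on_max with
  | empty => intro g _ i hi; simp at hi
  | insert a s hs IH =>
    intro g hsum i hi
    have hnotmem : a ∉ s := fun h => lt_irrefl a (hs a h)
    rw [Finset.sum_insert hnotmem] at hsum
    have hga : g a = 0 := by
      have hc := congrArg (fun p => Polynomial.coeff p a) hsum
      simp only [Polynomial.coeff_add, Polynomial.finset_sum_coeff, Polynomial.coeff_smul,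
        smul_eq_mul, Polynomial.coeff_zero] at hc
      have hz : ∀ j ∈ s, g j * (f j).coeff a = 0 := fun j hj => by
        rw [Polynomial.coeff_eq_zero_of_degree_lt
          (by rw [hdeg j]; exact_mod_cast hs j hj), mul_zero]
      rw [Finset.sum_eq_zero hz, add_zero] at hc
      have hfa : (f a).coeff a ≠ 0 := by
        have h1 := deg_natDegree (hdeg a)
        have h2 : (f a).coeff a = (f a).leadingCoeff := by
          rw [Polynomial.leadingCoeff, h1]
        rw [h2]
        exact Polynomial.leadingCoeff_ne_zero.mpr (deg_ne_zero (hdeg a))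
      exact (mul_eq_zero.mp hc).resolve_right hfa
    rcases Finset.mem_insert.mp hi with h | h
    · exact h ▸ hga
    · refine IH g ?_ i h
      rw [hga, zero_smul, zero_add] at hsum
      exact hsum

lemma seq_span (f : ℕ → Polynomial K) (hdeg : ∀ n, (f n).degree = n) :
    ∀ (n : ℕ) (p : Polynomial K), p.natDegree ≤ n →
      p ∈ Submodule.span K (Set.range f) := by
  intro n
  induction n using Nat.strong_induction_on with
  | _ n IH =>
    intro p hp
    rcases eq_or_ne p 0 with h0 | h0
    · rw [h0]; exact Submodule.zero_mem _
    set d := p.natDegree with hd_def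
    have hqd := hdeg d
    have hqne : f d ≠ 0 := deg_ne_zero hqd
    have hlcq : (f d).leadingCoeff ≠ 0 := Polynomial.leadingCoeff_ne_zero.mpr hqne
    set a := p.leadingCoeff / (f d).leadingCoeff with ha_def
    set r := p - a • f d with hr_def
    have hfd : f d ∈ Submodule.span K (Set.range f) := Submodule.subset_span ⟨d, rfl⟩
    have hpdecomp : p = a • f d + r := by rw [hr_def]; ring
    have hr : r = 0 ∨ r.natDegree < d := by
      rcases eq_or_ne r 0 with h | h
      · exact Or.inl h
      refine Or.inr ?_
      have hrdeg : r.degree < p.degree := by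
        refine Polynomial.degree_sub_lt ?_ h0 ?_
        · rw [smul_deg (div_ne_zero (Polynomial.leadingCoeff_ne_zero.mpr h0) hlcq), hqd,
            Polynomial.degree_eq_natDegree h0]
        · rw [Polynomial.smul_eq_C_mul, Polynomial.leadingCoeff_mul, Polynomial.leadingCoeff_C,
            ha_def, div_mul_cancel₀ _ hlcq]
      have := hrdeg
      rw [Polynomial.degree_eq_natDegree h, Polynomial.degree_eq_natDegree h0] at this
      exact_mod_cast this
    have hrmem : r ∈ Submodule.span K (Set.range f) := by
      rcases hr with h | h
      · rw [h]; exact Submodule.zero_mem _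
      · exact IH r.natDegree (by omega) r le_rfl
    rw [hpdecomp]
    exact Submodule.add_mem _ (Submodule.smul_mem _ a hfd) hrmem

noncomputable def seqBasis (f : ℕ → Polynomial K) (hdeg : ∀ n, (f n).degree = n) :
    Module.Basis ℕ K (Polynomial K) :=
  Module.Basis.mk (seq_linearIndependent f hdeg) (fun p _ => seq_span f hdeg p.natDegree p le_rfl)


variable (K)

/-- `(s_n)` is a sequence of Sheffer F-polynomials of `Q` iff
`s_n = S^{−1} q_n` for some `S ∈ Σ_F` invertible in `Σ_F`. -/
theorem sheffer_iff_inv_basic (Q : Module.End K (Polynomial K)) (hQ : DeltaOp K Q)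
    (q : ℕ → Polynomial K) (hq : BasicSeq K Q q) (s : ℕ → Polynomial K) :
    ShefferSeq K Q s ↔ ∃ S Sinv : Module.End K (Polynomial K),
      ShiftInv K S ∧ ShiftInv K Sinv ∧ S * Sinv = 1 ∧ Sinv * S = 1 ∧
      ∀ n : ℕ, s n = Sinv (q n) := by
  have hQ1 := delta_one hQ
  constructor
  · rintro ⟨hsdeg, ⟨c, hc, hs0⟩, hQs⟩
    set bs := seqBasis s hsdeg with hbs_def
    set bq := seqBasis q hq.1 with hbq_def
    set S : Module.End K (Polynomial K) := bs.constr K q with hS_def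
    set Sinv : Module.End K (Polynomial K) := bq.constr K s with hSinv_def
    have hbs : ∀ n, bs n = s n := fun n => Module.Basis.mk_apply _ _ n
    have hbq : ∀ n, bq n = q n := fun n => Module.Basis.mk_apply _ _ n
    have hSs : ∀ n, S (s n) = q n := fun n => by
      rw [← hbs n, hS_def]; exact bs.constr_basis K q n
    have hSinvq : ∀ n, Sinv (q n) = s n := fun n => by
      rw [← hbq n, hSinv_def]; exact bq.constr_basis K s n
    have hSSinv : S * Sinv = 1 := Module.Basis.ext (b := bq) fun n => by
      rw [hbq, Module.End.mul_apply, hSinvq, hSs, Module.End.one_apply]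
    have hSinvS : Sinv * S = 1 := Module.Basis.ext (b := bs) fun n => by
      rw [hbs, Module.End.mul_apply, hSs, hSinvq, Module.End.one_apply]
    have hQs0 : Q (s 0) = 0 := by rw [hs0, delta_C hQ1]
    have hSQ : ∀ p, S (Q p) = Q (S p) := by
      have h1 : S * Q = Q * S := Module.Basis.ext (b := bs) fun n => by
        rcases Nat.eq_zero_or_pos n with h | h
        · subst h
          rw [hbs, Module.End.mul_apply, Module.End.mul_apply, hQs0, map_zero, hSs, hq.2.1, hQ1]
        · rw [hbs, Module.End.mul_apply, Module.End.mul_apply, hQs n h, map_smul, hSs, hSs,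
            hq.2.2.2 n h]
      intro p
      rw [← Module.End.mul_apply, h1, Module.End.mul_apply]
    have hSinvQ : ∀ p, Sinv (Q p) = Q (Sinv p) := by
      have h1 : Sinv * Q = Q * Sinv := Module.Basis.ext (b := bq) fun n => by
        rcases Nat.eq_zero_or_pos n with h | h
        · subst h
          rw [hbq, Module.End.mul_apply, Module.End.mul_apply, hSinvq, hq.2.1, hQ1, map_zero, hQs0]
        · rw [hbq, Module.End.mul_apply, Module.End.mul_apply, hq.2.2.2 n h, map_smul, hSinvq,
            hSinvq, hQs n h]
      intro p
      rw [← Module.End.mul_apply, h1, Module.End.mul_apply]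
    have hSQpow : ∀ (k : ℕ) (p : Polynomial K), S ((Q ^ k) p) = (Q ^ k) (S p) := by
      intro k
      induction k with
      | zero => intro p; simp
      | succ k IH =>
        intro p
        rw [pow_succ, Module.End.mul_apply, Module.End.mul_apply, IH (Q p), hSQ]
    have hSinvQpow : ∀ (k : ℕ) (p : Polynomial K), Sinv ((Q ^ k) p) = (Q ^ k) (Sinv p) := by
      intro k
      induction k with
      | zero => intro p; simp
      | succ k IH =>
        intro p
        rw [pow_succ, Module.End.mul_apply, Module.End.mul_apply, IH (Q p), hSinvQ]
    have hSd : ∀ p, S (fderivF K p) = fderivF K (S p) := by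
      intro p
      rw [expand_all hQ hq (fderivF_shiftInv (K := K)) p (max p.natDegree (S p).natDegree + 1)
          (by omega),
        expand_all hQ hq (fderivF_shiftInv (K := K)) (S p) (max p.natDegree (S p).natDegree + 1)
          (by omega), map_sum]
      refine Finset.sum_congr rfl fun k _ => ?_
      rw [map_smul, hSQpow]
    have hSinvd : ∀ p, Sinv (fderivF K p) = fderivF K (Sinv p) := by
      intro p
      rw [expand_all hQ hq (fderivF_shiftInv (K := K)) p (max p.natDegree (Sinv p).natDegree + 1)
          (by omega),
        expand_all hQ hq (fderivF_shiftInv (K := K)) (Sinv p) (max p.natDegree (Sinv p).natDegree + 1)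
          (by omega), map_sum]
      refine Finset.sum_congr rfl fun k _ => ?_
      rw [map_smul, hSinvQpow]
    exact ⟨S, Sinv, shiftInv_of_comm K S hSd, shiftInv_of_comm K Sinv hSinvd, hSSinv, hSinvS,
      fun n => (hSinvq n).symm⟩
  · rintro ⟨S, Sinv, hS, hSinv, hSSi, hSiS, hsn⟩
    have hq0nat : (q 0).natDegree = 0 := deg_natDegree (hq.1 0)
    set a0 := (Sinv (q 0)).eval 0 / (Ffact 0 : K) with ha0_def
    have ha0' : Sinv (q 0) = C a0 := by
      conv_lhs => rw [expand_all hQ hq hSinv (q 0) 1 (by omega)]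
      rw [Finset.sum_range_one, pow_zero, Module.End.one_apply, ← ha0_def, hq.2.1,
        Polynomial.smul_eq_C_mul, mul_one]
    have ha0 : s 0 = C a0 := by rw [hsn 0, ha0']
    have ha0ne : a0 ≠ 0 := by
      intro h
      have h1 : Sinv (q 0) = 0 := by
        rw [← hsn 0, ha0, h, Polynomial.C_0]
      have h2 : (1 : Polynomial K) = 0 := by
        have h3 := congrArg (fun p => S p) h1
        simp only [map_zero] at h3
        rw [← Module.End.mul_apply, hSSi, Module.End.one_apply, hq.2.1] at h3
        exact h3
      exact one_ne_zero h2
    have hexp : ∀ n : ℕ, s n = ∑ k ∈ Finset.range (n + 1),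
        (((Sinv (q k)).eval 0) / (Ffact k : K)) • ((Q ^ k) (q n)) := by
      intro n
      rw [hsn n, expand_all hQ hq hSinv (q n) (n + 1) (by rw [deg_natDegree (hq.1 n)]; omega)]
    refine ⟨?_, ⟨a0, ha0ne, ha0⟩, ?_⟩
    · intro n
      rcases Nat.eq_zero_or_pos n with h | h
      · subst h
        rw [ha0, Polynomial.degree_C ha0ne]
        rfl
      · rw [hexp n, Finset.sum_range_succ']
        have hf0 : (((Sinv (q 0)).eval 0) / (Ffact 0 : K)) • ((Q ^ 0) (q n)) = a0 • q n := by
          rw [pow_zero, Module.End.one_apply, ha0_def]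
        rw [hf0]
        have hmain : (a0 • q n).degree = (n : WithBot ℕ) := by rw [smul_deg ha0ne, hq.1 n]
        rw [Polynomial.degree_add_eq_right_of_degree_lt, hmain]
        rw [hmain]
        refine lt_of_le_of_lt (Polynomial.degree_sum_le _ _) ?_
        rw [Finset.sup_lt_iff (by exact WithBot.bot_lt_coe n)]
        intro k hk
        simp only [Finset.mem_range] at hk
        refine lt_of_le_of_lt (Polynomial.degree_smul_le _ _) ?_
        rw [Q_pow_basic hQ1 hq]
        refine lt_of_le_of_lt (Polynomial.degree_smul_le _ _) ?_
        rw [hq.1 (n - (k + 1))]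
        exact_mod_cast (by omega : n - (k + 1) < n)
    · intro n hn
      rw [hsn n, ← shiftInv_comm_Q hQ hq hSinv (q n), hq.2.2.2 n hn, map_smul, ← hsn (n - 1)]
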